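/- Let T be a tournament with at least 8 vertices that embeds a diamond. If T has an interval of cardinality 2, then T is not {−3}-self dual. -/
import Mathlib


/-- A (finite) tournament on a vertex type `V`: for each pair of distinct
vertices exactly one arc. -/
structure Tournament (V : Type*) where
  arc : V → V → Prop
  irrefl : ∀ x, ¬ arc x x
  total : ∀ x y, x ≠ y → (arc x y ↔ ¬ arc y x)

namespace Tournament

variable {V W : Type*}

/-- The dual tournament, obtained by reversing all arcs. -/
def dual (T : Tournament V) : Tournament V where
  arc x y := T.arc y x
  irrefl x := T.irrefl x
  total x y h := T.total y x (Ne.symm h)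

/-- The subtournament induced on a subset `X` of the vertex set. -/
def restrict (T : Tournament V) (X : Set V) : Tournament X where
  arc x y := T.arc x y
  irrefl x := T.irrefl x
  total x y h := T.total x y (fun e => h (Subtype.ext e))

/-- Isomorphism of tournaments: an arc-preserving bijection. -/
def Iso (T : Tournament V) (T' : Tournament W) : Prop :=
  ∃ e : V ≃ W, ∀ x y, T.arc x y ↔ T'.arc (e x) (e y)

/-- `I` is an interval of `T`: every vertex outside `I` dominates all of `I`
or is dominated by all of `I`. -/
def IsInterval (T : Tournament V) (I : Set V) : Prop :=
  ∀ x ∉ I, (∀ y ∈ I, T.arc x y) ∨ (∀ y ∈ I, T.arc y x)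

/-- A tournament is indecomposable if all its intervals are trivial. -/
def Indecomposable (T : Tournament V) : Prop :=
  ∀ I : Set V, T.IsInterval I → I = ∅ ∨ I = Set.univ ∨ ∃ x, I = {x}

def Decomposable (T : Tournament V) : Prop := ¬ T.Indecomposable

/-- Transitive tournament (a linear order). -/
def Transitive (T : Tournament V) : Prop :=
  ∀ x y z, T.arc x y → T.arc y z → T.arc x z

/-- An almost transitive tournament is obtained from a transitive tournament
with at least 3 vertices by reversing the arc between its two extremal
vertices. -/
def AlmostTransitive [Fintype V] (T : Tournament V) : Prop :=
  3 ≤ Fintype.card V ∧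
  ∃ T₀ : Tournament V, T₀.Transitive ∧
    ∃ a b : V, a ≠ b ∧ (∀ y, y ≠ a → T₀.arc a y) ∧ (∀ y, y ≠ b → T₀.arc y b) ∧
      T.arc b a ∧
      ∀ x y, ¬ ((x = a ∧ y = b) ∨ (x = b ∧ y = a)) → (T.arc x y ↔ T₀.arc x y)

/-- Strong connectedness: a directed path between any two distinct vertices. -/
def StronglyConnected (T : Tournament V) : Prop :=
  ∀ x y : V, x ≠ y → Relation.TransGen T.arc x y

/-- `{k}`-hypomorphy: the induced subtournaments on every `k`-element set of
vertices are isomorphic. -/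
def Hypo (T T' : Tournament V) (k : ℕ) : Prop :=
  ∀ X : Set V, X.ncard = k → (T.restrict X).Iso (T'.restrict X)

/-- `{-k}`-hypomorphy, i.e. `{n-k}`-hypomorphy where `n` is the number of
vertices. -/
def MinusHypo [Fintype V] (T T' : Tournament V) (k : ℕ) : Prop :=
  Hypo T T' (Fintype.card V - k)

/-- Self duality. -/
def SelfDual (T : Tournament V) : Prop := T.Iso T.dual

/-- `{-k}`-self duality: removing any `k` vertices yields a self dual
tournament. -/
def MinusSelfDual (T : Tournament V) (k : ℕ) : Prop :=
  ∀ X : Set V, X.ncard = k → (T.restrict Xᶜ).SelfDual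

/-- `{-k}`-reconstructibility: every tournament `{-k}`-hypomorphic to `T` is
isomorphic to `T`. -/
def MinusReconstructible [Fintype V] (T : Tournament V) (k : ℕ) : Prop :=
  ∀ T' : Tournament V, MinusHypo T T' k → T.Iso T'

/-- Strong interval. -/
def IsStrongInterval (T : Tournament V) (X : Set V) : Prop :=
  T.IsInterval X ∧ ∀ Y : Set V, T.IsInterval Y → (X ∩ Y).Nonempty → X ⊆ Y ∨ Y ⊆ X

/-- `P T` : the maximal strong intervals of `T` distinct from the full vertex
set. -/
def P (T : Tournament V) : Set (Set V) :=
  {X | X.Nonempty ∧ X ≠ Set.univ ∧ T.IsStrongInterval X ∧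
    ∀ Y : Set V, Y ≠ Set.univ → T.IsStrongInterval Y → X ⊆ Y → X = Y}

/-- `Ptilde T` : equals `P T` when `T` is strongly connected; otherwise it
consists of the members of `P T` of size at least 2 together with the maximal
unions of consecutive singleton members (i.e. the maximal intervals of `T` all
of whose elements are singleton members of `P T`). -/
def Ptilde (T : Tournament V) : Set (Set V) :=
  {A | (T.StronglyConnected ∧ A ∈ T.P) ∨
    (¬ T.StronglyConnected ∧
      ((A ∈ T.P ∧ 2 ≤ A.ncard) ∨
        (A.Nonempty ∧ (∀ x ∈ A, ({x} : Set V) ∈ T.P) ∧ T.IsInterval A ∧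
          ∀ B : Set V, A ⊆ B → (∀ x ∈ B, ({x} : Set V) ∈ T.P) →
            T.IsInterval B → A = B)))}

/-- Equality of the quotients of `T` and `T'` by a common interval partition
`Part`: between any two distinct blocks, the arcs of `T` and `T'` agree. -/
def QuotientEq (T T' : Tournament V) (Part : Set (Set V)) : Prop :=
  ∀ X ∈ Part, ∀ Y ∈ Part, X ≠ Y → ∀ x ∈ X, ∀ y ∈ Y, (T.arc x y ↔ T'.arc x y)

/-- The set of vertices outside `I` dominated by every vertex of `I`. -/
def Iplus (T : Tournament V) (I : Set V) : Set V :=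
  {x | x ∉ I ∧ ∀ y ∈ I, T.arc y x}

/-- The set of vertices outside `I` dominating every vertex of `I`. -/
def Iminus (T : Tournament V) (I : Set V) : Set V :=
  {x | x ∉ I ∧ ∀ y ∈ I, T.arc x y}

/-- The 3-cycle `C₃`. -/
def C3Tour : Tournament (Fin 3) where
  arc x y := (x = 0 ∧ y = 1) ∨ (x = 1 ∧ y = 2) ∨ (x = 2 ∧ y = 0)
  irrefl := by decide
  total := by decide

/-- The transitive tournament `O_q` on `q` vertices. -/
def LinOrd (q : ℕ) : Tournament (Fin q) where
  arc x y := x < y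
  irrefl x := lt_irrefl x
  total x y h := by
    constructor
    · exact fun hxy hyx => lt_asymm hxy hyx
    · intro hyx
      exact lt_of_le_of_ne (not_lt.mp hyx) h

/-- The positive diamond `δ⁺` (on `{0,1,2,3}`, cycle `0→1→2→0`, all dominating
the center `3`). -/
def DeltaPlus : Tournament (Fin 4) where
  arc x y := (x = 0 ∧ y = 1) ∨ (x = 1 ∧ y = 2) ∨ (x = 2 ∧ y = 0) ∨
    (x = 0 ∧ y = 3) ∨ (x = 1 ∧ y = 3) ∨ (x = 2 ∧ y = 3)
  irrefl := by decide
  total := by decide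

/-- The negative diamond `δ⁻`. -/
def DeltaMinus : Tournament (Fin 4) := DeltaPlus.dual

/-- `T` embeds a diamond: some 4-element subset of the vertices induces a
diamond. -/
def EmbedsDiamond (T : Tournament V) : Prop :=
  ∃ X : Set V, X.ncard = 4 ∧
    ((T.restrict X).Iso DeltaPlus ∨ (T.restrict X).Iso DeltaMinus)

/-- `X` is a positive diamond of `T` with center `d`. -/
def IsPosDiamond (T : Tournament V) (X : Set V) (d : V) : Prop :=
  X.ncard = 4 ∧ d ∈ X ∧ (T.restrict X).Iso DeltaPlus ∧
    (T.restrict (X \ {d})).Iso C3Tour ∧ ∀ y ∈ X \ {d}, T.arc y d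

/-- `X` is a negative diamond of `T` with center `d`. -/
def IsNegDiamond (T : Tournament V) (X : Set V) (d : V) : Prop :=
  X.ncard = 4 ∧ d ∈ X ∧ (T.restrict X).Iso DeltaMinus ∧
    (T.restrict (X \ {d})).Iso C3Tour ∧ ∀ y ∈ X \ {d}, T.arc d y

/-- The tournament obtained from `H` by dilating the vertex `x` by `R`. -/
def Dilate {α β : Type*} (H : Tournament α) (x : α) (R : Tournament β) :
    Tournament ({y : α // y ≠ x} ⊕ β) where
  arc u v :=
    match u, v with
    | .inl y, .inl z => H.arc y.1 z.1
    | .inl y, .inr _ => H.arc y.1 x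
    | .inr _, .inl z => H.arc x z.1
    | .inr u, .inr v => R.arc u v
  irrefl u := by
    cases u with
    | inl y => exact H.irrefl y.1
    | inr u => exact R.irrefl u
  total u v h := by
    cases u with
    | inl y =>
      cases v with
      | inl z =>
        exact H.total y.1 z.1 (fun e => h (congrArg Sum.inl (Subtype.ext e)))
      | inr v => exact H.total y.1 x y.2
    | inr u =>
      cases v with
      | inl z => exact H.total x z.1 (Ne.symm z.2)
      | inr v => exact R.total u v (fun e => h (congrArg Sum.inr e))

/-- The class `I_{n,K}` (for `K` a set of positive integers representing the
negative indices): tournaments on `n` vertices which are indecomposable, not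
self dual, and `{-k}`-self dual for every `k ∈ K`. -/
def ClassI (n : ℕ) (K : Set ℕ) (R : Tournament (Fin n)) : Prop :=
  R.Indecomposable ∧ ¬ R.SelfDual ∧ ∀ k ∈ K, R.MinusSelfDual k

/-- Membership (up to isomorphism) in the class
`Ω_n = C₃(I_{n-2,{-1,-2,-3}}) ∪ O₃(I_{n-2,{-1,-2,-3}}) ∪ O₂(I_{n-1,{-2,-3}})`. -/
def InOmega (n : ℕ) (T : Tournament V) : Prop :=
  (∃ R : Tournament (Fin (n - 2)), ClassI (n - 2) {1, 2, 3} R ∧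
    ∃ x : Fin 3, T.Iso (Dilate C3Tour x R)) ∨
  (∃ R : Tournament (Fin (n - 2)), ClassI (n - 2) {1, 2, 3} R ∧
    ∃ x : Fin 3, T.Iso (Dilate (LinOrd 3) x R)) ∨
  (∃ R : Tournament (Fin (n - 1)), ClassI (n - 1) {2, 3} R ∧
    ∃ x : Fin 2, T.Iso (Dilate (LinOrd 2) x R))

end Tournament

-- ===== Auxiliary development for the proof of Statement 9 =====
open Finset

section Machinery

variable {V : Type*} [Fintype V] [DecidableEq V]

noncomputable def pSum (N : Finset V → ℤ) (P : Finset V → Prop) [DecidablePred P] : ℤ :=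
  ∑ K ∈ univ.powerset, if P K then N K else 0

lemma pSum_congr (N : Finset V → ℤ) (P Q : Finset V → Prop)
    [DecidablePred P] [DecidablePred Q]
    (h : ∀ K : Finset V, P K ↔ Q K) : pSum N P = pSum N Q := by
  unfold pSum
  apply Finset.sum_congr rfl
  intro K _
  by_cases hP : P K
  · rw [if_pos hP, if_pos ((h K).mp hP)]
  · rw [if_neg hP, if_neg (fun hq => hP ((h K).mpr hq))]

lemma pSum_split (N : Finset V → ℤ) (P : Finset V → Prop) [DecidablePred P] (x : V) :
    pSum N P = pSum N (fun K => P K ∧ x ∈ K) + pSum N (fun K => P K ∧ x ∉ K) := by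
  unfold pSum
  rw [← Finset.sum_add_distrib]
  apply Finset.sum_congr rfl
  intro K _
  by_cases hP : P K <;> by_cases hx : x ∈ K <;> simp [hP, hx]

lemma pSum_step (N : Finset V → ℤ) (k : ℕ) (hsupp : ∀ K, N K ≠ 0 → K.card = k)
    (Y : Finset V)
    (h : ∀ x ∉ Y, pSum N (fun K => Disjoint K (insert x Y)) = 0)
    (hpos : Y.card + k < Fintype.card V) :
    pSum N (fun K => Disjoint K Y) = 0 := by
  have key : ∀ x ∈ univ \ Y,
      (∑ K ∈ univ.powerset, if Disjoint K Y then (if x ∈ K then 0 else N K) else 0) = 0 := by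
    intro x hx
    rw [mem_sdiff] at hx
    have e1 : pSum N (fun K => Disjoint K (insert x Y))
        = ∑ K ∈ univ.powerset, if Disjoint K Y then (if x ∈ K then 0 else N K) else 0 := by
      unfold pSum
      apply Finset.sum_congr rfl
      intro K _
      by_cases hd : Disjoint K Y <;> by_cases hxK : x ∈ K <;>
        simp [hd, hxK, Finset.disjoint_insert_right]
    rw [← e1]
    exact h x hx.2
  have h2 : ∑ K ∈ univ.powerset,
      (∑ x ∈ univ \ Y, if Disjoint K Y then (if x ∈ K then 0 else N K) else 0) = 0 := by
    rw [Finset.sum_comm]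
    rw [Finset.sum_congr rfl key]
    simp
  have h3 : ∀ K ∈ univ.powerset,
      (∑ x ∈ univ \ Y, if Disjoint K Y then (if x ∈ K then 0 else N K) else 0)
      = ((Fintype.card V - Y.card - k : ℕ) : ℤ) *
          (if Disjoint K Y then N K else 0) := by
    intro K hK
    rw [mem_powerset] at hK
    by_cases hd : Disjoint K Y
    · simp only [if_pos hd]
      by_cases hN : N K = 0
      · simp [hN]
      · have hcardK := hsupp K hN
        rw [Finset.sum_ite]
        have hset : (univ \ Y).filter (fun x => ¬ x ∈ K) = univ \ (Y ∪ K) := by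
          ext v
          simp only [mem_filter, mem_sdiff, mem_union, mem_univ, true_and]
          tauto
        have hcard : ((univ \ Y).filter (fun x => ¬ x ∈ K)).card
            = Fintype.card V - Y.card - k := by
          rw [hset, Finset.card_sdiff_of_subset (subset_univ _), Finset.card_univ,
            Finset.card_union_of_disjoint hd.symm]
          omega
        rw [Finset.sum_const, Finset.sum_const, hcard]
        simp [nsmul_eq_mul]
    · simp [hd]
  have h4 : ((Fintype.card V - Y.card - k : ℕ) : ℤ) * pSum N (fun K => Disjoint K Y) = 0 := by
    unfold pSum
    rw [Finset.mul_sum]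
    rw [← Finset.sum_congr rfl h3]
    exact h2
  rcases mul_eq_zero.mp h4 with h6 | h6
  · exfalso
    have hne : Fintype.card V - Y.card - k ≠ 0 := by omega
    exact hne (by exact_mod_cast h6)
  · exact h6

end Machinery

section Machinery2

variable {V : Type*} [Fintype V] [DecidableEq V]

lemma pSum_subset_eq_zero (N : Finset V → ℤ) (k : ℕ) (hk : k ≤ 5)
    (hsupp : ∀ K, N K ≠ 0 → K.card = k)
    (hcard : 8 ≤ Fintype.card V)
    (h0 : ∀ X : Finset V, X.card = 3 → pSum N (fun K => Disjoint K X) = 0)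
    (X : Finset V) (hX : X.card = 3) :
    pSum N (fun K => X ⊆ K) = 0 := by
  have d2 : ∀ Y : Finset V, Y.card = 2 → pSum N (fun K => Disjoint K Y) = 0 := by
    intro Y hY
    refine pSum_step N k hsupp Y (fun x hx => h0 _ ?_) (by omega)
    rw [Finset.card_insert_of_notMem hx, hY]
  have d1 : ∀ Y : Finset V, Y.card = 1 → pSum N (fun K => Disjoint K Y) = 0 := by
    intro Y hY
    refine pSum_step N k hsupp Y (fun x hx => d2 _ ?_) (by omega)
    rw [Finset.card_insert_of_notMem hx, hY]
  have d0 : pSum N (fun K => Disjoint K (∅ : Finset V)) = 0 := by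
    refine pSum_step N k hsupp ∅ (fun x hx => d1 _ ?_) (by simp; omega)
    simp
  have gT : pSum N (fun _ => True) = 0 := by
    rw [pSum_congr N (fun _ => True) (fun K => Disjoint K (∅ : Finset V)) (by simp)]
    exact d0
  have g1 : ∀ x : V, pSum N (fun K => x ∉ K) = 0 := by
    intro x
    rw [pSum_congr N (fun K => x ∉ K) (fun K => Disjoint K ({x} : Finset V))
      (by intro K; simp [Finset.disjoint_singleton_right])]
    exact d1 _ (Finset.card_singleton x)
  have g2 : ∀ x y : V, x ≠ y → pSum N (fun K => x ∉ K ∧ y ∉ K) = 0 := by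
    intro x y hxy
    rw [pSum_congr N _ (fun K => Disjoint K ({x, y} : Finset V))
      (by intro K; simp [Finset.disjoint_insert_right, Finset.disjoint_singleton_right])]
    exact d2 _ (Finset.card_pair hxy)
  obtain ⟨α, β, γ, hαβ, hαγ, hβγ, rfl⟩ := Finset.card_eq_three.mp hX
  have g3 : pSum N (fun K => α ∉ K ∧ β ∉ K ∧ γ ∉ K) = 0 := by
    rw [pSum_congr N _ (fun K => Disjoint K ({α, β, γ} : Finset V))
      (by intro K; simp [Finset.disjoint_insert_right, Finset.disjoint_singleton_right])]
    exact h0 _ hX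
  have A1 : pSum N (fun K => α ∈ K) = 0 := by
    have hs := pSum_split N (fun _ => True) α
    rw [gT, pSum_congr N (fun K => True ∧ α ∈ K) (fun K => α ∈ K) (by tauto),
      pSum_congr N (fun K => True ∧ α ∉ K) (fun K => α ∉ K) (by tauto), g1 α] at hs
    linarith
  have A2aux : pSum N (fun K => α ∈ K ∧ β ∉ K) = 0 := by
    have hs := pSum_split N (fun K => β ∉ K) α
    rw [g1 β, pSum_congr N (fun K => β ∉ K ∧ α ∉ K) (fun K => α ∉ K ∧ β ∉ K) (by tauto),
      g2 α β hαβ] at hs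
    have : pSum N (fun K => β ∉ K ∧ α ∈ K) = 0 := by linarith
    rw [← this]
    exact pSum_congr N _ _ (by tauto)
  have A2 : pSum N (fun K => α ∈ K ∧ β ∈ K) = 0 := by
    have hs := pSum_split N (fun K => α ∈ K) β
    rw [A1, A2aux] at hs
    linarith
  have B2 : pSum N (fun K => γ ∉ K ∧ α ∈ K) = 0 := by
    have hs := pSum_split N (fun K => γ ∉ K) α
    rw [g1 γ, pSum_congr N (fun K => γ ∉ K ∧ α ∉ K) (fun K => α ∉ K ∧ γ ∉ K) (by tauto),
      g2 α γ hαγ] at hs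
    linarith
  have B3 : pSum N (fun K => γ ∉ K ∧ α ∈ K ∧ β ∉ K) = 0 := by
    have hg2 : pSum N (fun K => γ ∉ K ∧ β ∉ K) = 0 := by
      rw [pSum_congr N _ (fun K => β ∉ K ∧ γ ∉ K) (by tauto)]
      exact g2 β γ hβγ
    have hs := pSum_split N (fun K => γ ∉ K ∧ β ∉ K) α
    rw [hg2, pSum_congr N (fun K => (γ ∉ K ∧ β ∉ K) ∧ α ∉ K)
      (fun K => α ∉ K ∧ β ∉ K ∧ γ ∉ K) (by tauto), g3] at hs
    have : pSum N (fun K => (γ ∉ K ∧ β ∉ K) ∧ α ∈ K) = 0 := by linarith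
    rw [← this]
    exact pSum_congr N _ _ (by tauto)
  have B4 : pSum N (fun K => α ∈ K ∧ β ∈ K ∧ γ ∉ K) = 0 := by
    have hs := pSum_split N (fun K => γ ∉ K ∧ α ∈ K) β
    rw [B2, pSum_congr N (fun K => (γ ∉ K ∧ α ∈ K) ∧ β ∉ K)
      (fun K => γ ∉ K ∧ α ∈ K ∧ β ∉ K) (by tauto), B3] at hs
    have : pSum N (fun K => (γ ∉ K ∧ α ∈ K) ∧ β ∈ K) = 0 := by linarith
    rw [← this]
    exact pSum_congr N _ _ (by tauto)
  have A3 : pSum N (fun K => α ∈ K ∧ β ∈ K ∧ γ ∈ K) = 0 := by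
    have hs := pSum_split N (fun K => α ∈ K ∧ β ∈ K) γ
    rw [A2, pSum_congr N (fun K => (α ∈ K ∧ β ∈ K) ∧ γ ∉ K)
      (fun K => α ∈ K ∧ β ∈ K ∧ γ ∉ K) (by tauto), B4] at hs
    have : pSum N (fun K => (α ∈ K ∧ β ∈ K) ∧ γ ∈ K) = 0 := by linarith
    rw [← this]
    exact pSum_congr N _ _ (by tauto)
  rw [pSum_congr N (fun K => ({α, β, γ} : Finset V) ⊆ K)
    (fun K => α ∈ K ∧ β ∈ K ∧ γ ∈ K)
    (by intro K; simp [Finset.insert_subset_iff])]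
  exact A3

end Machinery2

namespace Tournament
variable {V : Type*}
-- ===== auxiliary development =====

variable (T : Tournament V)

lemma arc_asymm {x y : V} (h : T.arc x y) : ¬ T.arc y x := by
  by_cases hxy : x = y
  · subst hxy; exact fun _ => T.irrefl x h
  · exact (T.total x y hxy).mp h

lemma arc_ne {x y : V} (h : T.arc x y) : x ≠ y := by
  rintro rfl; exact T.irrefl x h

lemma arc_total' {x y : V} (h : x ≠ y) (h2 : ¬ T.arc x y) : T.arc y x :=
  (T.total y x h.symm).mpr h2

def Cyc (x y z : V) : Prop := T.arc x y ∧ T.arc y z ∧ T.arc z x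

lemma cyc_rot {x y z : V} (h : T.Cyc x y z) : T.Cyc y z x := ⟨h.2.1, h.2.2, h.1⟩

section Counting

variable [Fintype V] [DecidableEq V]

/-- `K` consists of a 3-cycle together with `m` further vertices, all dominated
by the 3-cycle. -/
def CycDom (m : ℕ) (K : Finset V) : Prop :=
  ∃ x y z : V, T.Cyc x y z ∧ ({x, y, z} : Finset V) ⊆ K ∧ K.card = m + 3 ∧
    ∀ w ∈ K, w ∉ ({x, y, z} : Finset V) → T.arc x w ∧ T.arc y w ∧ T.arc z w

/-- dual notion : the extra vertices dominate the 3-cycle. -/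
def CycSub (m : ℕ) (K : Finset V) : Prop :=
  ∃ x y z : V, T.Cyc x y z ∧ ({x, y, z} : Finset V) ⊆ K ∧ K.card = m + 3 ∧
    ∀ w ∈ K, w ∉ ({x, y, z} : Finset V) → T.arc w x ∧ T.arc w y ∧ T.arc w z

open Classical in
noncomputable def NN (m : ℕ) : Finset V → ℤ := fun K =>
  (if T.CycDom m K then 1 else 0) - (if T.CycSub m K then 1 else 0)

lemma NN_supp (m : ℕ) : ∀ K : Finset V, T.NN m K ≠ 0 → K.card = m + 3 := by
  classical
  intro K hK
  by_cases h1 : T.CycDom m K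
  · obtain ⟨x, y, z, _, _, hcard, _⟩ := h1; exact hcard
  · by_cases h2 : T.CycSub m K
    · obtain ⟨x, y, z, _, _, hcard, _⟩ := h2; exact hcard
    · exfalso; apply hK; simp [NN, h1, h2]

/-- transfer along an anti-isomorphism of the subtournament on `Xᶜ`. -/
lemma cycDom_image (m : ℕ) (C : Set V) (φ : V → V)
    (harc : ∀ u v : V, u ∈ C → v ∈ C → (T.arc u v ↔ T.arc (φ v) (φ u)))
    (hmem : ∀ v ∈ C, φ v ∈ C)
    (hinj : ∀ u ∈ C, ∀ v ∈ C, φ u = φ v → u = v)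
    (K : Finset V) (hKC : ∀ v ∈ K, v ∈ C)
    (h : T.CycDom m K) : T.CycSub m (K.image φ) := by
  obtain ⟨x, y, z, hcyc, hsub, hcard, hdom⟩ := h
  have hx : x ∈ K := hsub (by simp)
  have hy : y ∈ K := hsub (by simp)
  have hz : z ∈ K := hsub (by simp)
  have hxC := hKC x hx
  have hyC := hKC y hy
  have hzC := hKC z hz
  refine ⟨φ x, φ z, φ y, ⟨?_, ?_, ?_⟩, ?_, ?_, ?_⟩
  · exact (harc z x hzC hxC).mp hcyc.2.2
  · exact (harc y z hyC hzC).mp hcyc.2.1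
  · exact (harc x y hxC hyC).mp hcyc.1
  · intro w hw
    simp only [mem_insert, mem_singleton] at hw
    rcases hw with rfl | rfl | rfl
    · exact Finset.mem_image_of_mem φ hx
    · exact Finset.mem_image_of_mem φ hz
    · exact Finset.mem_image_of_mem φ hy
  · rw [Finset.card_image_of_injOn (fun u hu v hv huv => hinj u (hKC u hu) v (hKC v hv) huv)]
    exact hcard
  · intro w' hw' hw'n
    obtain ⟨w, hwK, rfl⟩ := Finset.mem_image.mp hw'
    have hwC := hKC w hwK
    have hwn : w ∉ ({x, y, z} : Finset V) := by
      intro hmem2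
      apply hw'n
      simp only [mem_insert, mem_singleton] at hmem2 ⊢
      rcases hmem2 with rfl | rfl | rfl
      · exact Or.inl rfl
      · exact Or.inr (Or.inr rfl)
      · exact Or.inr (Or.inl rfl)
    obtain ⟨h1, h2, h3⟩ := hdom w hwK hwn
    exact ⟨(harc x w hxC hwC).mp h1, (harc z w hzC hwC).mp h3, (harc y w hyC hwC).mp h2⟩

lemma cycSub_image (m : ℕ) (C : Set V) (φ : V → V)
    (harc : ∀ u v : V, u ∈ C → v ∈ C → (T.arc u v ↔ T.arc (φ v) (φ u)))
    (hmem : ∀ v ∈ C, φ v ∈ C)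
    (hinj : ∀ u ∈ C, ∀ v ∈ C, φ u = φ v → u = v)
    (K : Finset V) (hKC : ∀ v ∈ K, v ∈ C)
    (h : T.CycSub m K) : T.CycDom m (K.image φ) := by
  obtain ⟨x, y, z, hcyc, hsub, hcard, hdom⟩ := h
  have hx : x ∈ K := hsub (by simp)
  have hy : y ∈ K := hsub (by simp)
  have hz : z ∈ K := hsub (by simp)
  have hxC := hKC x hx
  have hyC := hKC y hy
  have hzC := hKC z hz
  refine ⟨φ x, φ z, φ y, ⟨?_, ?_, ?_⟩, ?_, ?_, ?_⟩
  · exact (harc z x hzC hxC).mp hcyc.2.2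
  · exact (harc y z hyC hzC).mp hcyc.2.1
  · exact (harc x y hxC hyC).mp hcyc.1
  · intro w hw
    simp only [mem_insert, mem_singleton] at hw
    rcases hw with rfl | rfl | rfl
    · exact Finset.mem_image_of_mem φ hx
    · exact Finset.mem_image_of_mem φ hz
    · exact Finset.mem_image_of_mem φ hy
  · rw [Finset.card_image_of_injOn (fun u hu v hv huv => hinj u (hKC u hu) v (hKC v hv) huv)]
    exact hcard
  · intro w' hw' hw'n
    obtain ⟨w, hwK, rfl⟩ := Finset.mem_image.mp hw'
    have hwC := hKC w hwK
    have hwn : w ∉ ({x, y, z} : Finset V) := by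
      intro hmem2
      apply hw'n
      simp only [mem_insert, mem_singleton] at hmem2 ⊢
      rcases hmem2 with rfl | rfl | rfl
      · exact Or.inl rfl
      · exact Or.inr (Or.inr rfl)
      · exact Or.inr (Or.inl rfl)
    obtain ⟨h1, h2, h3⟩ := hdom w hwK hwn
    exact ⟨(harc w x hwC hxC).mp h1, (harc w z hwC hzC).mp h3, (harc w y hwC hyC).mp h2⟩

end Counting

end Tournament

namespace Tournament
section H0
variable {V : Type*} [Fintype V] [DecidableEq V] (T : Tournament V)

lemma pSum_NN_eq_zero (m : ℕ) (h : T.MinusSelfDual 3)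
    (X : Finset V) (hX : X.card = 3) :
    pSum (T.NN m) (fun K => Disjoint K X) = 0 := by
  classical
  have hsd := h (↑X : Set V) (by rw [Set.ncard_coe_finset]; exact hX)
  set C : Set V := (↑X : Set V)ᶜ with hCdef
  obtain ⟨e, he⟩ := hsd
  have hmemC : ∀ v : V, v ∉ X ↔ v ∈ C := by
    intro v; simp [hCdef]
  set f : V → V := fun v => if h : v ∈ C then ((e ⟨v, h⟩ : C) : V) else v with hfdef
  set g : V → V := fun v => if h : v ∈ C then ((e.symm ⟨v, h⟩ : C) : V) else v with hgdef
  have hfC : ∀ v ∈ C, f v ∈ C := by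
    intro v hv; simp only [hfdef, dif_pos hv]; exact (e ⟨v, hv⟩).2
  have hgC : ∀ v ∈ C, g v ∈ C := by
    intro v hv; simp only [hgdef, dif_pos hv]; exact (e.symm ⟨v, hv⟩).2
  have hgf : ∀ v ∈ C, g (f v) = v := by
    intro v hv
    simp only [hfdef, hgdef, dif_pos hv, dif_pos ((e ⟨v, hv⟩).2)]
    have h1 : (⟨((e ⟨v, hv⟩ : C) : V), (e ⟨v, hv⟩).2⟩ : C) = e ⟨v, hv⟩ := rfl
    rw [h1, Equiv.symm_apply_apply]
  have hfg : ∀ v ∈ C, f (g v) = v := by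
    intro v hv
    simp only [hfdef, hgdef, dif_pos hv, dif_pos ((e.symm ⟨v, hv⟩).2)]
    have h1 : (⟨((e.symm ⟨v, hv⟩ : C) : V), (e.symm ⟨v, hv⟩).2⟩ : C) = e.symm ⟨v, hv⟩ := rfl
    rw [h1, Equiv.apply_symm_apply]
  have harcf : ∀ u v : V, u ∈ C → v ∈ C → (T.arc u v ↔ T.arc (f v) (f u)) := by
    intro u v hu hv
    have h2 := he ⟨u, hu⟩ ⟨v, hv⟩
    simp only [restrict, dual] at h2
    simp only [hfdef, dif_pos hu, dif_pos hv]
    exact h2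
  have harcg : ∀ u v : V, u ∈ C → v ∈ C → (T.arc u v ↔ T.arc (g v) (g u)) := by
    intro u v hu hv
    have h2 := harcf (g v) (g u) (hgC v hv) (hgC u hu)
    rw [hfg u hu, hfg v hv] at h2
    exact h2.symm
  have hinjf : ∀ u ∈ C, ∀ v ∈ C, f u = f v → u = v := by
    intro u hu v hv huv
    rw [← hgf u hu, ← hgf v hv, huv]
  have hinjg : ∀ u ∈ C, ∀ v ∈ C, g u = g v → u = v := by
    intro u hu v hv huv
    rw [← hfg u hu, ← hfg v hv, huv]
  unfold pSum
  have hsplit : ∀ K : Finset V, (if Disjoint K X then T.NN m K else 0)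
      = (if Disjoint K X ∧ T.CycDom m K then (1:ℤ) else 0)
        - (if Disjoint K X ∧ T.CycSub m K then 1 else 0) := by
    intro K
    by_cases h1 : Disjoint K X <;> by_cases h2 : T.CycDom m K <;>
      by_cases h3 : T.CycSub m K <;> simp [NN, h1, h2, h3]
  rw [Finset.sum_congr rfl (fun K _ => hsplit K), Finset.sum_sub_distrib,
    Finset.sum_boole, Finset.sum_boole]
  have hKC : ∀ K : Finset V, Disjoint K X → ∀ v ∈ K, v ∈ C := by
    intro K hd v hv
    exact (hmemC v).mp (Finset.disjoint_left.mp hd hv)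
  have himage : ∀ (φ : V → V), (∀ v ∈ C, φ v ∈ C) → ∀ K : Finset V, Disjoint K X →
      Disjoint (K.image φ) X := by
    intro φ hφ K hd
    rw [Finset.disjoint_left]
    intro v hv
    obtain ⟨w, hw, rfl⟩ := Finset.mem_image.mp hv
    intro hmem2
    exact ((hmemC _).mpr (hφ w (hKC K hd w hw))) (by simpa [hCdef] using hmem2)
  have hbij : (univ.powerset.filter (fun K => Disjoint K X ∧ T.CycDom m K)).card
      = (univ.powerset.filter (fun K => Disjoint K X ∧ T.CycSub m K)).card := by
    refine Finset.card_bij' (fun K _ => K.image f) (fun K _ => K.image g) ?_ ?_ ?_ ?_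
    · intro K hK
      rw [Finset.mem_filter] at hK ⊢
      obtain ⟨_, hd, hdom⟩ := hK
      exact ⟨Finset.mem_powerset.mpr (subset_univ _), himage f hfC K hd,
        T.cycDom_image m C f harcf hfC hinjf K (hKC K hd) hdom⟩
    · intro K hK
      rw [Finset.mem_filter] at hK ⊢
      obtain ⟨_, hd, hdom⟩ := hK
      exact ⟨Finset.mem_powerset.mpr (subset_univ _), himage g hgC K hd,
        T.cycSub_image m C g harcg hgC hinjg K (hKC K hd) hdom⟩
    · intro K hK
      rw [Finset.mem_filter] at hK
      show Finset.image g (Finset.image f K) = K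
      rw [Finset.image_image]
      have : K.image (g ∘ f) = K.image id :=
        Finset.image_congr (fun v hv => hgf v (hKC K hK.2.1 v hv))
      rw [this, Finset.image_id]
    · intro K hK
      rw [Finset.mem_filter] at hK
      show Finset.image f (Finset.image g K) = K
      rw [Finset.image_image]
      have : K.image (f ∘ g) = K.image id :=
        Finset.image_congr (fun v hv => hfg v (hKC K hK.2.1 v hv))
      rw [this, Finset.image_id]
  rw [hbij]
  ring

end H0
end Tournament

namespace Tournament
section Extraction
variable {V : Type*} [Fintype V] [DecidableEq V] (T : Tournament V)

lemma cyc_mem_cases {p q r u : V} (hc : T.Cyc p q r) (hu : u = p ∨ u = q ∨ u = r) :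
    ∃ s t, T.Cyc u s t ∧ (∀ m : V, (m = p ∨ m = q ∨ m = r) ↔ (m = u ∨ m = s ∨ m = t)) := by
  rcases hu with rfl | rfl | rfl
  · exact ⟨q, r, hc, fun m => Iff.rfl⟩
  · exact ⟨r, p, T.cyc_rot hc, fun m => by tauto⟩
  · exact ⟨p, q, T.cyc_rot (T.cyc_rot hc), fun m => by tauto⟩

lemma cyc_of_eq {p q r u v w : V} (hc : T.Cyc p q r)
    (h : ∀ m : V, (m = p ∨ m = q ∨ m = r) ↔ (m = u ∨ m = v ∨ m = w))
    (huv : u ≠ v) (huw : u ≠ w) (hvw : v ≠ w) :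
    T.Cyc u v w ∨ T.Cyc u w v := by
  obtain ⟨s, t, hc1, hmem⟩ := T.cyc_mem_cases hc ((h u).mpr (Or.inl rfl))
  have hv : v = u ∨ v = s ∨ v = t := (hmem v).mp ((h v).mpr (Or.inr (Or.inl rfl)))
  have hw : w = u ∨ w = s ∨ w = t := (hmem w).mp ((h w).mpr (Or.inr (Or.inr rfl)))
  rcases hv with rfl | rfl | rfl
  · exact absurd rfl huv
  · rcases hw with rfl | rfl | rfl
    · exact absurd rfl huw
    · exact absurd rfl hvw
    · exact Or.inl hc1
  · rcases hw with rfl | rfl | rfl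
    · exact absurd rfl huw
    · exact Or.inr hc1
    · exact absurd rfl hvw

lemma finset_eq_iff_mem {p q r u v w : V}
    (h : ({p, q, r} : Finset V) = {u, v, w}) :
    ∀ m : V, (m = p ∨ m = q ∨ m = r) ↔ (m = u ∨ m = v ∨ m = w) := by
  intro m
  have := Finset.ext_iff.mp h m
  simpa using this

lemma card3_of_cyc {p q r : V} (hc : T.Cyc p q r) : ({p, q, r} : Finset V).card = 3 := by
  have h1 : p ≠ q := T.arc_ne hc.1
  have h2 : q ≠ r := T.arc_ne hc.2.1
  have h3 : p ≠ r := (T.arc_ne hc.2.2).symm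
  rw [Finset.card_insert_of_notMem (by simp [h1, h3]),
    Finset.card_insert_of_notMem (by simp [h2]), Finset.card_singleton]

/-- From a finset equation `{p,q,r} = {u,v,w}` with `u,v,w` distinct,
transfer a 3-cycle. -/
lemma cyc_of_finset_eq {p q r u v w : V} (hc : T.Cyc p q r)
    (h : ({p, q, r} : Finset V) = {u, v, w})
    (huv : u ≠ v) (huw : u ≠ w) (hvw : v ≠ w) :
    T.Cyc u v w ∨ T.Cyc u w v :=
  T.cyc_of_eq hc (finset_eq_iff_mem h) huv huw hvw

end Extraction
end Tournament

namespace Tournament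
section NC
variable {V : Type*} [Fintype V] [DecidableEq V] (T : Tournament V)

lemma not_cyc_mem_ab (a b : V) (hab : a ≠ b)
    (htw : ∀ v, v ≠ a → v ≠ b → (T.arc v a ↔ T.arc v b))
    {p q r : V} (hc : T.Cyc p q r) (ha : a = p ∨ a = q ∨ a = r)
    (hb : b = p ∨ b = q ∨ b = r) : False := by
  obtain ⟨s, t, hc1, hmem⟩ := T.cyc_mem_cases hc ha
  have hbmem : b = a ∨ b = s ∨ b = t := (hmem b).mp hb
  rcases hbmem with rfl | rfl | rfl
  · exact hab rfl
  · -- cycle a → b → t → a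
    have htna : t ≠ a := T.arc_ne hc1.2.2
    have htnb : t ≠ b := fun h => (T.arc_ne hc1.2.1) h.symm
    exact T.arc_asymm hc1.2.1 ((htw t htna htnb).mp hc1.2.2)
  · -- cycle a → s → b → a
    have hsnb : s ≠ b := T.arc_ne hc1.2.1
    have hsna : s ≠ a := fun h => (T.arc_ne hc1.1) h.symm
    exact T.arc_asymm hc1.1 ((htw s hsna hsnb).mpr hc1.2.1)

lemma no_cyc_dom_a (hcard : 8 ≤ Fintype.card V) (hmsd : T.MinusSelfDual 3)
    (a b : V) (hab : a ≠ b)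
    (htw : ∀ v, v ≠ a → v ≠ b → (T.arc v a ↔ T.arc v b)) :
    ¬ ∃ u v w, T.Cyc u v w ∧ T.arc u a ∧ T.arc v a ∧ T.arc w a := by
  have hS : ∀ X : Finset V, X.card = 3 → pSum (T.NN 2) (fun K => X ⊆ K) = 0 :=
    fun X hX => pSum_subset_eq_zero (T.NN 2) 5 (le_refl 5) (T.NN_supp 2) hcard
      (fun Y hY => T.pSum_NN_eq_zero 2 hmsd Y hY) X hX
  rintro ⟨u, v, w, hcyc, hua, hva, hwa⟩
  have huna : u ≠ a := T.arc_ne hua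
  have hvna : v ≠ a := T.arc_ne hva
  have hwna : w ≠ a := T.arc_ne hwa
  have hunb : u ≠ b := by
    intro h
    rw [h] at hcyc
    have hvnb : v ≠ b := fun h2 => (T.arc_ne hcyc.1) h2.symm
    exact T.arc_asymm hcyc.1 ((htw v hvna hvnb).mp hva)
  have hvnb : v ≠ b := by
    intro h
    rw [h] at hcyc
    have hwnb : w ≠ b := fun h2 => (T.arc_ne hcyc.2.1) h2.symm
    exact T.arc_asymm hcyc.2.1 ((htw w hwna hwnb).mp hwa)
  have hwnb : w ≠ b := by
    intro h
    rw [h] at hcyc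
    have hunb2 : u ≠ b := fun h2 => (T.arc_ne hcyc.2.2) h2.symm
    exact T.arc_asymm hcyc.2.2 ((htw u huna hunb2).mp hua)
  have hub2 : T.arc u b := (htw u huna hunb).mp hua
  have hvb2 : T.arc v b := (htw v hvna hvnb).mp hva
  have hwb2 : T.arc w b := (htw w hwna hwnb).mp hwa
  have hX₀ : ({a, b, u} : Finset V).card = 3 := by
    rw [Finset.card_insert_of_notMem (by simp [hab, Ne.symm huna]),
      Finset.card_insert_of_notMem (by simp [Ne.symm hunb]), Finset.card_singleton]
  have hzero := hS {a, b, u} hX₀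
  have hnoSub : ∀ K : Finset V, ({a, b, u} : Finset V) ⊆ K → ¬ T.CycSub 2 K := by
    intro K hsubK hcs
    obtain ⟨p, q, r, hc, hsub3, hcard5, hdom⟩ := hcs
    have haK : a ∈ K := hsubK (by simp)
    have hbK : b ∈ K := hsubK (by simp)
    have huK : u ∈ K := hsubK (by simp)
    have hamem : ¬ (a = p ∨ a = q ∨ a = r) := by
      intro ha
      by_cases hbmem : b = p ∨ b = q ∨ b = r
      · exact T.not_cyc_mem_ab a b hab htw hc ha hbmem
      · have hbout : b ∉ ({p, q, r} : Finset V) := by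
          simp only [Finset.mem_insert, Finset.mem_singleton]; exact hbmem
        obtain ⟨hb1, hb2, hb3⟩ := hdom b hbK hbout
        obtain ⟨s, t, hc1, hmem⟩ := T.cyc_mem_cases hc ha
        have hta : T.arc t a := hc1.2.2
        have htb : T.arc b t := by
          have ht : t = p ∨ t = q ∨ t = r := (hmem t).mpr (Or.inr (Or.inr rfl))
          rcases ht with rfl | rfl | rfl
          exacts [hb1, hb2, hb3]
        have htna : t ≠ a := T.arc_ne hta
        have htnb : t ≠ b := fun h => (T.arc_ne htb) h.symm
        exact T.arc_asymm htb ((htw t htna htnb).mp hta)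
    have hbmem : ¬ (b = p ∨ b = q ∨ b = r) := by
      intro hb
      have haout : a ∉ ({p, q, r} : Finset V) := by
        simp only [Finset.mem_insert, Finset.mem_singleton]; exact hamem
      obtain ⟨ha1, ha2, ha3⟩ := hdom a haK haout
      obtain ⟨s, t, hc1, hmem⟩ := T.cyc_mem_cases hc hb
      have htb : T.arc t b := hc1.2.2
      have hat : T.arc a t := by
        have ht : t = p ∨ t = q ∨ t = r := (hmem t).mpr (Or.inr (Or.inr rfl))
        rcases ht with rfl | rfl | rfl
        exacts [ha1, ha2, ha3]
      have htnb : t ≠ b := T.arc_ne htb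
      have htna : t ≠ a := fun h => (T.arc_ne hat) h.symm
      exact T.arc_asymm hat ((htw t htna htnb).mpr htb)
    have houtcard : (K \ ({p, q, r} : Finset V)).card = 2 := by
      rw [Finset.card_sdiff_of_subset hsub3, hcard5, T.card3_of_cyc hc]
    have habsub : ({a, b} : Finset V) ⊆ K \ ({p, q, r} : Finset V) := by
      intro m hm
      simp only [Finset.mem_insert, Finset.mem_singleton] at hm
      rcases hm with rfl | rfl
      · exact Finset.mem_sdiff.mpr ⟨haK, by
          simp only [Finset.mem_insert, Finset.mem_singleton]; exact hamem⟩
      · exact Finset.mem_sdiff.mpr ⟨hbK, by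
          simp only [Finset.mem_insert, Finset.mem_singleton]; exact hbmem⟩
    have habeq : ({a, b} : Finset V) = K \ ({p, q, r} : Finset V) :=
      Finset.eq_of_subset_of_card_le habsub (by rw [houtcard, Finset.card_pair hab])
    have humem : u = p ∨ u = q ∨ u = r := by
      by_contra hu
      have hu2 : u ∈ K \ ({p, q, r} : Finset V) := Finset.mem_sdiff.mpr ⟨huK, by
        simp only [Finset.mem_insert, Finset.mem_singleton]; exact hu⟩
      rw [← habeq] at hu2
      simp only [Finset.mem_insert, Finset.mem_singleton] at hu2
      rcases hu2 with rfl | rfl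
      · exact huna rfl
      · exact hunb rfl
    have haout : a ∉ ({p, q, r} : Finset V) := by
      simp only [Finset.mem_insert, Finset.mem_singleton]; exact hamem
    obtain ⟨ha1, ha2, ha3⟩ := hdom a haK haout
    have hau : T.arc a u := by
      rcases humem with rfl | rfl | rfl
      exacts [ha1, ha2, ha3]
    exact T.arc_asymm hua hau
  have hK₀card : ({a, b, u, v, w} : Finset V).card = 5 := by
    have h1 : u ≠ v := T.arc_ne hcyc.1
    have h2 : v ≠ w := T.arc_ne hcyc.2.1
    have h3 : u ≠ w := (T.arc_ne hcyc.2.2).symm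
    rw [Finset.card_insert_of_notMem (by
        simp [hab, Ne.symm huna, Ne.symm hvna, Ne.symm hwna]),
      Finset.card_insert_of_notMem (by simp [Ne.symm hunb, Ne.symm hvnb, Ne.symm hwnb]),
      Finset.card_insert_of_notMem (by simp [h1, h3]),
      Finset.card_insert_of_notMem (by simp [h2]), Finset.card_singleton]
  have hDom : T.CycDom 2 ({a, b, u, v, w} : Finset V) := by
    refine ⟨u, v, w, hcyc, ?_, by rw [hK₀card], ?_⟩
    · intro m hm
      simp only [Finset.mem_insert, Finset.mem_singleton] at hm ⊢
      tauto
    · intro m hmK hmout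
      simp only [Finset.mem_insert, Finset.mem_singleton] at hmK hmout
      push_neg at hmout
      rcases hmK with rfl | rfl | rfl | rfl | rfl
      · exact ⟨hua, hva, hwa⟩
      · exact ⟨hub2, hvb2, hwb2⟩
      · exact absurd rfl hmout.1
      · exact absurd rfl hmout.2.1
      · exact absurd rfl hmout.2.2
  have hsub0 : ({a, b, u} : Finset V) ⊆ ({a, b, u, v, w} : Finset V) := by
    intro m hm
    simp only [Finset.mem_insert, Finset.mem_singleton] at hm ⊢
    tauto
  have hpos : 0 < pSum (T.NN 2) (fun K => ({a, b, u} : Finset V) ⊆ K) := by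
    unfold pSum
    apply Finset.sum_pos'
    · intro K _
      by_cases hsubK : ({a, b, u} : Finset V) ⊆ K
      · rw [if_pos hsubK]
        simp only [NN]
        rw [if_neg (hnoSub K hsubK)]
        by_cases hdm : T.CycDom 2 K <;> simp [hdm]
      · rw [if_neg hsubK]
    · refine ⟨{a, b, u, v, w}, Finset.mem_powerset.mpr (Finset.subset_univ _), ?_⟩
      rw [if_pos hsub0]
      simp only [NN]
      rw [if_pos hDom, if_neg (hnoSub _ hsub0)]
      norm_num
  rw [hzero] at hpos
  exact lt_irrefl 0 hpos

end NC
end Tournament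

namespace Tournament
section NC2
variable {V : Type*} [Fintype V] [DecidableEq V] (T : Tournament V)

lemma no_cyc_sub_a (hcard : 8 ≤ Fintype.card V) (hmsd : T.MinusSelfDual 3)
    (a b : V) (hab : a ≠ b)
    (htw : ∀ v, v ≠ a → v ≠ b → (T.arc v a ↔ T.arc v b))
    (htw2 : ∀ v, v ≠ a → v ≠ b → (T.arc a v ↔ T.arc b v)) :
    ¬ ∃ u v w, T.Cyc u v w ∧ T.arc a u ∧ T.arc a v ∧ T.arc a w := by
  have hS : ∀ X : Finset V, X.card = 3 → pSum (T.NN 2) (fun K => X ⊆ K) = 0 :=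
    fun X hX => pSum_subset_eq_zero (T.NN 2) 5 (le_refl 5) (T.NN_supp 2) hcard
      (fun Y hY => T.pSum_NN_eq_zero 2 hmsd Y hY) X hX
  rintro ⟨u, v, w, hcyc, hau, hav, haw⟩
  have huna : u ≠ a := (T.arc_ne hau).symm
  have hvna : v ≠ a := (T.arc_ne hav).symm
  have hwna : w ≠ a := (T.arc_ne haw).symm
  have hunb : u ≠ b := by
    intro h
    rw [h] at hcyc
    have hwnb : w ≠ b := T.arc_ne hcyc.2.2
    exact T.arc_asymm hcyc.2.2 ((htw2 w hwna hwnb).mp haw)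
  have hvnb : v ≠ b := by
    intro h
    rw [h] at hcyc
    have hunb2 : u ≠ b := T.arc_ne hcyc.1
    exact T.arc_asymm hcyc.1 ((htw2 u huna hunb2).mp hau)
  have hwnb : w ≠ b := by
    intro h
    rw [h] at hcyc
    have hvnb2 : v ≠ b := T.arc_ne hcyc.2.1
    exact T.arc_asymm hcyc.2.1 ((htw2 v hvna hvnb2).mp hav)
  have hbu2 : T.arc b u := (htw2 u huna hunb).mp hau
  have hbv2 : T.arc b v := (htw2 v hvna hvnb).mp hav
  have hbw2 : T.arc b w := (htw2 w hwna hwnb).mp haw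
  have hX₀ : ({a, b, u} : Finset V).card = 3 := by
    rw [Finset.card_insert_of_notMem (by simp [hab, Ne.symm huna]),
      Finset.card_insert_of_notMem (by simp [Ne.symm hunb]), Finset.card_singleton]
  have hzero := hS {a, b, u} hX₀
  have hnoDom : ∀ K : Finset V, ({a, b, u} : Finset V) ⊆ K → ¬ T.CycDom 2 K := by
    intro K hsubK hcs
    obtain ⟨p, q, r, hc, hsub3, hcard5, hdom⟩ := hcs
    have haK : a ∈ K := hsubK (by simp)
    have hbK : b ∈ K := hsubK (by simp)
    have huK : u ∈ K := hsubK (by simp)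
    have hamem : ¬ (a = p ∨ a = q ∨ a = r) := by
      intro ha
      by_cases hbmem : b = p ∨ b = q ∨ b = r
      · exact T.not_cyc_mem_ab a b hab htw hc ha hbmem
      · have hbout : b ∉ ({p, q, r} : Finset V) := by
          simp only [Finset.mem_insert, Finset.mem_singleton]; exact hbmem
        obtain ⟨hb1, hb2, hb3⟩ := hdom b hbK hbout
        obtain ⟨s, t, hc1, hmem⟩ := T.cyc_mem_cases hc ha
        have has : T.arc a s := hc1.1
        have hsb : T.arc s b := by
          have hs : s = p ∨ s = q ∨ s = r := (hmem s).mpr (Or.inr (Or.inl rfl))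
          rcases hs with rfl | rfl | rfl
          exacts [hb1, hb2, hb3]
        have hsna : s ≠ a := (T.arc_ne has).symm
        have hsnb : s ≠ b := T.arc_ne hsb
        exact T.arc_asymm has ((htw s hsna hsnb).mpr hsb)
    have hbmem : ¬ (b = p ∨ b = q ∨ b = r) := by
      intro hb
      have haout : a ∉ ({p, q, r} : Finset V) := by
        simp only [Finset.mem_insert, Finset.mem_singleton]; exact hamem
      obtain ⟨ha1, ha2, ha3⟩ := hdom a haK haout
      obtain ⟨s, t, hc1, hmem⟩ := T.cyc_mem_cases hc hb
      have hbs : T.arc b s := hc1.1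
      have hsa : T.arc s a := by
        have hs : s = p ∨ s = q ∨ s = r := (hmem s).mpr (Or.inr (Or.inl rfl))
        rcases hs with rfl | rfl | rfl
        exacts [ha1, ha2, ha3]
      have hsnb : s ≠ b := (T.arc_ne hbs).symm
      have hsna : s ≠ a := T.arc_ne hsa
      exact T.arc_asymm hbs ((htw s hsna hsnb).mp hsa)
    have houtcard : (K \ ({p, q, r} : Finset V)).card = 2 := by
      rw [Finset.card_sdiff_of_subset hsub3, hcard5, T.card3_of_cyc hc]
    have habsub : ({a, b} : Finset V) ⊆ K \ ({p, q, r} : Finset V) := by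
      intro m hm
      simp only [Finset.mem_insert, Finset.mem_singleton] at hm
      rcases hm with rfl | rfl
      · exact Finset.mem_sdiff.mpr ⟨haK, by
          simp only [Finset.mem_insert, Finset.mem_singleton]; exact hamem⟩
      · exact Finset.mem_sdiff.mpr ⟨hbK, by
          simp only [Finset.mem_insert, Finset.mem_singleton]; exact hbmem⟩
    have habeq : ({a, b} : Finset V) = K \ ({p, q, r} : Finset V) :=
      Finset.eq_of_subset_of_card_le habsub (by rw [houtcard, Finset.card_pair hab])
    have humem : u = p ∨ u = q ∨ u = r := by
      by_contra hu
      have hu2 : u ∈ K \ ({p, q, r} : Finset V) := Finset.mem_sdiff.mpr ⟨huK, by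
        simp only [Finset.mem_insert, Finset.mem_singleton]; exact hu⟩
      rw [← habeq] at hu2
      simp only [Finset.mem_insert, Finset.mem_singleton] at hu2
      rcases hu2 with rfl | rfl
      · exact huna rfl
      · exact hunb rfl
    have haout : a ∉ ({p, q, r} : Finset V) := by
      simp only [Finset.mem_insert, Finset.mem_singleton]; exact hamem
    obtain ⟨ha1, ha2, ha3⟩ := hdom a haK haout
    have hua : T.arc u a := by
      rcases humem with rfl | rfl | rfl
      exacts [ha1, ha2, ha3]
    exact T.arc_asymm hau hua
  have hK₀card : ({a, b, u, v, w} : Finset V).card = 5 := by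
    have h1 : u ≠ v := T.arc_ne hcyc.1
    have h2 : v ≠ w := T.arc_ne hcyc.2.1
    have h3 : u ≠ w := (T.arc_ne hcyc.2.2).symm
    rw [Finset.card_insert_of_notMem (by
        simp [hab, Ne.symm huna, Ne.symm hvna, Ne.symm hwna]),
      Finset.card_insert_of_notMem (by simp [Ne.symm hunb, Ne.symm hvnb, Ne.symm hwnb]),
      Finset.card_insert_of_notMem (by simp [h1, h3]),
      Finset.card_insert_of_notMem (by simp [h2]), Finset.card_singleton]
  have hSub : T.CycSub 2 ({a, b, u, v, w} : Finset V) := by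
    refine ⟨u, v, w, hcyc, ?_, by rw [hK₀card], ?_⟩
    · intro m hm
      simp only [Finset.mem_insert, Finset.mem_singleton] at hm ⊢
      tauto
    · intro m hmK hmout
      simp only [Finset.mem_insert, Finset.mem_singleton] at hmK hmout
      push_neg at hmout
      rcases hmK with rfl | rfl | rfl | rfl | rfl
      · exact ⟨hau, hav, haw⟩
      · exact ⟨hbu2, hbv2, hbw2⟩
      · exact absurd rfl hmout.1
      · exact absurd rfl hmout.2.1
      · exact absurd rfl hmout.2.2
  have hsub0 : ({a, b, u} : Finset V) ⊆ ({a, b, u, v, w} : Finset V) := by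
    intro m hm
    simp only [Finset.mem_insert, Finset.mem_singleton] at hm ⊢
    tauto
  have hpos : 0 < -pSum (T.NN 2) (fun K => ({a, b, u} : Finset V) ⊆ K) := by
    unfold pSum
    rw [← Finset.sum_neg_distrib]
    apply Finset.sum_pos'
    · intro K _
      by_cases hsubK : ({a, b, u} : Finset V) ⊆ K
      · rw [if_pos hsubK]
        simp only [NN]
        rw [if_neg (hnoDom K hsubK)]
        by_cases hdm : T.CycSub 2 K <;> simp [hdm]
      · rw [if_neg hsubK]
        simp
    · refine ⟨{a, b, u, v, w}, Finset.mem_powerset.mpr (Finset.subset_univ _), ?_⟩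
      rw [if_pos hsub0]
      simp only [NN]
      rw [if_pos hSub, if_neg (hnoDom _ hsub0)]
      norm_num
  rw [hzero] at hpos
  norm_num at hpos

end NC2
end Tournament

namespace Tournament
section F2sec
variable {V : Type*} [Fintype V] [DecidableEq V] (T : Tournament V)

lemma exists_insert_of_card4 {X K : Finset V} (hX : X.card = 3) (hsub : X ⊆ K)
    (hK : K.card = 4) : ∃ t, t ∉ X ∧ K = insert t X := by
  have h1 : (K \ X).card = 1 := by rw [Finset.card_sdiff_of_subset hsub, hK, hX]
  obtain ⟨t, ht⟩ := Finset.card_eq_one.mp h1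
  have htK : t ∈ K ∧ t ∉ X := by
    have : t ∈ K \ X := ht ▸ Finset.mem_singleton_self t
    exact ⟨(Finset.mem_sdiff.mp this).1, (Finset.mem_sdiff.mp this).2⟩
  refine ⟨t, htK.2, ?_⟩
  ext m
  constructor
  · intro hm
    by_cases hmX : m ∈ X
    · exact Finset.mem_insert_of_mem hmX
    · have : m ∈ K \ X := Finset.mem_sdiff.mpr ⟨hm, hmX⟩
      rw [ht, Finset.mem_singleton] at this
      rw [this]
      exact Finset.mem_insert_self t X
  · intro hm
    rcases Finset.mem_insert.mp hm with rfl | hmX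
    · exact htK.1
    · exact hsub hmX

variable {x y z : V}

lemma cycDom1_iff (hxy : T.arc x y) (hyz : T.arc y z) (hxz : T.arc x z)
    {t : V} (htx : t ≠ x) (hty : t ≠ y) (htz : t ≠ z) :
    T.CycDom 1 (insert t {x, y, z}) ↔ (T.Cyc x y t ∧ T.arc t z) := by
  have hx_y : x ≠ y := T.arc_ne hxy
  have hy_z : y ≠ z := T.arc_ne hyz
  have hx_z : x ≠ z := T.arc_ne hxz
  have hcardK : (insert t ({x, y, z} : Finset V)).card = 4 := by
    rw [Finset.card_insert_of_notMem (by simp [htx, hty, htz]),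
      Finset.card_insert_of_notMem (by simp [hx_y, hx_z]),
      Finset.card_insert_of_notMem (by simp [hy_z]), Finset.card_singleton]
  constructor
  · rintro ⟨p, q, r, hc, hsub3, hcard4, hdom⟩
    have houtcard : ((insert t ({x, y, z} : Finset V)) \ ({p, q, r} : Finset V)).card = 1 := by
      rw [Finset.card_sdiff_of_subset hsub3, hcard4, T.card3_of_cyc hc]
    obtain ⟨o, ho⟩ := Finset.card_eq_one.mp houtcard
    have hoK : o ∈ insert t ({x, y, z} : Finset V) ∧ o ∉ ({p, q, r} : Finset V) := by
      have : o ∈ (insert t ({x, y, z} : Finset V)) \ ({p, q, r} : Finset V) :=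
        ho ▸ Finset.mem_singleton_self o
      exact ⟨(Finset.mem_sdiff.mp this).1, (Finset.mem_sdiff.mp this).2⟩
    have hmemcyc : ∀ m, m ∈ insert t ({x, y, z} : Finset V) → m ≠ o →
        m ∈ ({p, q, r} : Finset V) := by
      intro m hm hmo
      by_contra hmc
      have : m ∈ (insert t ({x, y, z} : Finset V)) \ ({p, q, r} : Finset V) :=
        Finset.mem_sdiff.mpr ⟨hm, hmc⟩
      rw [ho, Finset.mem_singleton] at this
      exact hmo this
    have harc_o : ∀ m, m ∈ ({p, q, r} : Finset V) → T.arc m o := by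
      intro m hm
      obtain ⟨h1, h2, h3⟩ := hdom o hoK.1 hoK.2
      simp only [Finset.mem_insert, Finset.mem_singleton] at hm
      rcases hm with rfl | rfl | rfl
      exacts [h1, h2, h3]
    have hocases : o = t ∨ o = x ∨ o = y ∨ o = z := by
      have := hoK.1
      simp only [Finset.mem_insert, Finset.mem_singleton] at this
      tauto
    rcases hocases with rfl | rfl | rfl | rfl
    · -- o = t : the cycle is {x,y,z}, impossible
      exfalso
      have hsubX : ({p, q, r} : Finset V) ⊆ ({x, y, z} : Finset V) := by
        intro m hm
        have hmK : m ∈ insert o ({x, y, z} : Finset V) := hsub3 hm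
        rcases Finset.mem_insert.mp hmK with rfl | h
        · exact absurd hm hoK.2
        · exact h
      have hXcard : ({x, y, z} : Finset V).card = 3 := by
        rw [Finset.card_insert_of_notMem (by simp [hx_y, hx_z]),
          Finset.card_insert_of_notMem (by simp [hy_z]), Finset.card_singleton]
      have heq : ({p, q, r} : Finset V) = ({x, y, z} : Finset V) :=
        Finset.eq_of_subset_of_card_le hsubX (by rw [hXcard, T.card3_of_cyc hc])
      rcases T.cyc_of_finset_eq hc heq hx_y hx_z hy_z with h | h
      · exact T.arc_asymm hxz h.2.2
      · exact T.arc_asymm hyz h.2.1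
    · -- o = x : then y is in the cycle and arc y x, contradiction
      exfalso
      have hy : y ∈ ({p, q, r} : Finset V) := hmemcyc y (by simp) (Ne.symm hx_y)
      exact T.arc_asymm hxy (harc_o y hy)
    · -- o = y : then z in cycle, arc z y contradiction
      exfalso
      have hz : z ∈ ({p, q, r} : Finset V) := hmemcyc z (by simp) (Ne.symm hy_z)
      exact T.arc_asymm hyz (harc_o z hz)
    · -- o = z : cycle = {x, y, t}
      have hsubX : ({p, q, r} : Finset V) ⊆ ({x, y, t} : Finset V) := by
        intro m hm
        have hmK : m ∈ insert t ({x, y, o} : Finset V) := hsub3 hm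
        have hmz : m ≠ o := by
          rintro rfl
          exact hoK.2 hm
        simp only [Finset.mem_insert, Finset.mem_singleton] at hmK ⊢
        rcases hmK with rfl | rfl | rfl | rfl
        · exact Or.inr (Or.inr rfl)
        · exact Or.inl rfl
        · exact Or.inr (Or.inl rfl)
        · exact absurd rfl hmz
      have hXcard : ({x, y, t} : Finset V).card = 3 := by
        rw [Finset.card_insert_of_notMem (by simp [hx_y, Ne.symm htx]),
          Finset.card_insert_of_notMem (by simp [Ne.symm hty]), Finset.card_singleton]
      have heq : ({p, q, r} : Finset V) = ({x, y, t} : Finset V) :=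
        Finset.eq_of_subset_of_card_le hsubX (by rw [hXcard, T.card3_of_cyc hc])
      have hcyc2 : T.Cyc x y t := by
        rcases T.cyc_of_finset_eq hc heq hx_y (Ne.symm htx) (Ne.symm hty) with h | h
        · exact h
        · exact absurd hxy (fun h2 => T.arc_asymm h2 h.2.2)
      refine ⟨hcyc2, ?_⟩
      exact harc_o t (by rw [heq]; simp)
  · rintro ⟨hcyc2, htz2⟩
    refine ⟨x, y, t, hcyc2, ?_, by rw [hcardK], ?_⟩
    · intro m hm
      simp only [Finset.mem_insert, Finset.mem_singleton] at hm ⊢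
      tauto
    · intro m hmK hmout
      simp only [Finset.mem_insert, Finset.mem_singleton] at hmK hmout
      push_neg at hmout
      rcases hmK with rfl | rfl | rfl | rfl
      · exact absurd rfl hmout.2.2
      · exact absurd rfl hmout.1
      · exact absurd rfl hmout.2.1
      · exact ⟨hxz, hyz, htz2⟩

lemma cycSub1_iff (hxy : T.arc x y) (hyz : T.arc y z) (hxz : T.arc x z)
    {t : V} (htx : t ≠ x) (hty : t ≠ y) (htz : t ≠ z) :
    T.CycSub 1 (insert t {x, y, z}) ↔ (T.Cyc y z t ∧ T.arc x t) := by
  have hx_y : x ≠ y := T.arc_ne hxy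
  have hy_z : y ≠ z := T.arc_ne hyz
  have hx_z : x ≠ z := T.arc_ne hxz
  have hcardK : (insert t ({x, y, z} : Finset V)).card = 4 := by
    rw [Finset.card_insert_of_notMem (by simp [htx, hty, htz]),
      Finset.card_insert_of_notMem (by simp [hx_y, hx_z]),
      Finset.card_insert_of_notMem (by simp [hy_z]), Finset.card_singleton]
  constructor
  · rintro ⟨p, q, r, hc, hsub3, hcard4, hdom⟩
    have houtcard : ((insert t ({x, y, z} : Finset V)) \ ({p, q, r} : Finset V)).card = 1 := by
      rw [Finset.card_sdiff_of_subset hsub3, hcard4, T.card3_of_cyc hc]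
    obtain ⟨o, ho⟩ := Finset.card_eq_one.mp houtcard
    have hoK : o ∈ insert t ({x, y, z} : Finset V) ∧ o ∉ ({p, q, r} : Finset V) := by
      have : o ∈ (insert t ({x, y, z} : Finset V)) \ ({p, q, r} : Finset V) :=
        ho ▸ Finset.mem_singleton_self o
      exact ⟨(Finset.mem_sdiff.mp this).1, (Finset.mem_sdiff.mp this).2⟩
    have hmemcyc : ∀ m, m ∈ insert t ({x, y, z} : Finset V) → m ≠ o →
        m ∈ ({p, q, r} : Finset V) := by
      intro m hm hmo
      by_contra hmc
      have : m ∈ (insert t ({x, y, z} : Finset V)) \ ({p, q, r} : Finset V) :=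
        Finset.mem_sdiff.mpr ⟨hm, hmc⟩
      rw [ho, Finset.mem_singleton] at this
      exact hmo this
    have harc_o : ∀ m, m ∈ ({p, q, r} : Finset V) → T.arc o m := by
      intro m hm
      obtain ⟨h1, h2, h3⟩ := hdom o hoK.1 hoK.2
      simp only [Finset.mem_insert, Finset.mem_singleton] at hm
      rcases hm with rfl | rfl | rfl
      exacts [h1, h2, h3]
    have hocases : o = t ∨ o = x ∨ o = y ∨ o = z := by
      have := hoK.1
      simp only [Finset.mem_insert, Finset.mem_singleton] at this
      tauto
    rcases hocases with rfl | rfl | rfl | rfl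
    · exfalso
      have hsubX : ({p, q, r} : Finset V) ⊆ ({x, y, z} : Finset V) := by
        intro m hm
        have hmK : m ∈ insert o ({x, y, z} : Finset V) := hsub3 hm
        rcases Finset.mem_insert.mp hmK with rfl | h
        · exact absurd hm hoK.2
        · exact h
      have hXcard : ({x, y, z} : Finset V).card = 3 := by
        rw [Finset.card_insert_of_notMem (by simp [hx_y, hx_z]),
          Finset.card_insert_of_notMem (by simp [hy_z]), Finset.card_singleton]
      have heq : ({p, q, r} : Finset V) = ({x, y, z} : Finset V) :=
        Finset.eq_of_subset_of_card_le hsubX (by rw [hXcard, T.card3_of_cyc hc])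
      rcases T.cyc_of_finset_eq hc heq hx_y hx_z hy_z with h | h
      · exact T.arc_asymm hxz h.2.2
      · exact T.arc_asymm hyz h.2.1
    · -- o = x : cycle = {y, z, t}, x dominates it
      have hsubX : ({p, q, r} : Finset V) ⊆ ({y, z, t} : Finset V) := by
        intro m hm
        have hmK : m ∈ insert t ({o, y, z} : Finset V) := hsub3 hm
        have hmx : m ≠ o := by
          rintro rfl
          exact hoK.2 hm
        simp only [Finset.mem_insert, Finset.mem_singleton] at hmK ⊢
        rcases hmK with rfl | rfl | rfl | rfl
        · exact Or.inr (Or.inr rfl)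
        · exact absurd rfl hmx
        · exact Or.inl rfl
        · exact Or.inr (Or.inl rfl)
      have hXcard : ({y, z, t} : Finset V).card = 3 := by
        rw [Finset.card_insert_of_notMem (by simp [hy_z, Ne.symm hty]),
          Finset.card_insert_of_notMem (by simp [Ne.symm htz]), Finset.card_singleton]
      have heq : ({p, q, r} : Finset V) = ({y, z, t} : Finset V) :=
        Finset.eq_of_subset_of_card_le hsubX (by rw [hXcard, T.card3_of_cyc hc])
      have hcyc2 : T.Cyc y z t := by
        rcases T.cyc_of_finset_eq hc heq hy_z (Ne.symm hty) (Ne.symm htz) with h | h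
        · exact h
        · exact absurd hyz (fun h2 => T.arc_asymm h2 h.2.2)
      refine ⟨hcyc2, ?_⟩
      exact harc_o t (by rw [heq]; simp)
    · -- o = y : x in cycle, arc y x contradiction
      exfalso
      have hx : x ∈ ({p, q, r} : Finset V) := hmemcyc x (by simp) hx_y
      exact T.arc_asymm hxy (harc_o x hx)
    · -- o = z : y in cycle, arc z y contradiction
      exfalso
      have hy : y ∈ ({p, q, r} : Finset V) := hmemcyc y (by simp) hy_z
      exact T.arc_asymm hyz (harc_o y hy)
  · rintro ⟨hcyc2, hxt2⟩
    refine ⟨y, z, t, hcyc2, ?_, by rw [hcardK], ?_⟩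
    · intro m hm
      simp only [Finset.mem_insert, Finset.mem_singleton] at hm ⊢
      tauto
    · intro m hmK hmout
      simp only [Finset.mem_insert, Finset.mem_singleton] at hmK hmout
      push_neg at hmout
      rcases hmK with rfl | rfl | rfl | rfl
      · exact absurd rfl hmout.2.2
      · exact ⟨hxy, hxz, hxt2⟩
      · exact absurd rfl hmout.1
      · exact absurd rfl hmout.2.1

end F2sec
end Tournament

namespace Tournament
section F2main
variable {V : Type*} [Fintype V] [DecidableEq V] (T : Tournament V)

lemma F2a (hcard : 8 ≤ Fintype.card V) (hmsd : T.MinusSelfDual 3)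
    {x y z : V} (hxy : T.arc x y) (hyz : T.arc y z) (hxz : T.arc x z)
    {w : V} (hw1 : T.Cyc x y w) (hw2 : T.arc w z) :
    ∃ s, T.Cyc y z s ∧ T.arc x s := by
  have hS : ∀ X : Finset V, X.card = 3 → pSum (T.NN 1) (fun K => X ⊆ K) = 0 :=
    fun X hX => pSum_subset_eq_zero (T.NN 1) 4 (by norm_num) (T.NN_supp 1) hcard
      (fun Y hY => T.pSum_NN_eq_zero 1 hmsd Y hY) X hX
  by_contra hB
  push_neg at hB
  have hx_y : x ≠ y := T.arc_ne hxy
  have hy_z : y ≠ z := T.arc_ne hyz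
  have hx_z : x ≠ z := T.arc_ne hxz
  have hX₀ : ({x, y, z} : Finset V).card = 3 := by
    rw [Finset.card_insert_of_notMem (by simp [hx_y, hx_z]),
      Finset.card_insert_of_notMem (by simp [hy_z]), Finset.card_singleton]
  have hzero := hS {x, y, z} hX₀
  have hnoSub : ∀ K : Finset V, ({x, y, z} : Finset V) ⊆ K → ¬ T.CycSub 1 K := by
    intro K hsub hcs
    have hcard4 : K.card = 4 := by
      obtain ⟨p, q, r, _, _, hc4, _⟩ := hcs
      exact hc4
    obtain ⟨t, htX, hKeq⟩ := exists_insert_of_card4 hX₀ hsub hcard4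
    simp only [Finset.mem_insert, Finset.mem_singleton] at htX
    push_neg at htX
    rw [hKeq] at hcs
    obtain ⟨hc, hxt⟩ := (T.cycSub1_iff hxy hyz hxz htX.1 htX.2.1 htX.2.2).mp hcs
    exact hB t hc hxt
  have hwx : w ≠ x := T.arc_ne hw1.2.2
  have hwy : w ≠ y := (T.arc_ne hw1.2.1).symm
  have hwz : w ≠ z := T.arc_ne hw2
  have hDom : T.CycDom 1 (insert w ({x, y, z} : Finset V)) :=
    (T.cycDom1_iff hxy hyz hxz hwx hwy hwz).mpr ⟨hw1, hw2⟩
  have hsub0 : ({x, y, z} : Finset V) ⊆ insert w ({x, y, z} : Finset V) :=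
    Finset.subset_insert _ _
  have hpos : 0 < pSum (T.NN 1) (fun K => ({x, y, z} : Finset V) ⊆ K) := by
    unfold pSum
    apply Finset.sum_pos'
    · intro K _
      by_cases hsubK : ({x, y, z} : Finset V) ⊆ K
      · rw [if_pos hsubK]
        simp only [NN]
        rw [if_neg (hnoSub K hsubK)]
        by_cases hdm : T.CycDom 1 K <;> simp [hdm]
      · rw [if_neg hsubK]
    · refine ⟨insert w ({x, y, z} : Finset V),
        Finset.mem_powerset.mpr (Finset.subset_univ _), ?_⟩
      rw [if_pos hsub0]
      simp only [NN]
      rw [if_pos hDom, if_neg (hnoSub _ hsub0)]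
      norm_num
  rw [hzero] at hpos
  exact lt_irrefl 0 hpos

lemma F2b (hcard : 8 ≤ Fintype.card V) (hmsd : T.MinusSelfDual 3)
    {x y z : V} (hxy : T.arc x y) (hyz : T.arc y z) (hxz : T.arc x z)
    {w : V} (hw1 : T.Cyc y z w) (hw2 : T.arc x w) :
    ∃ s, T.Cyc x y s ∧ T.arc s z := by
  have hS : ∀ X : Finset V, X.card = 3 → pSum (T.NN 1) (fun K => X ⊆ K) = 0 :=
    fun X hX => pSum_subset_eq_zero (T.NN 1) 4 (by norm_num) (T.NN_supp 1) hcard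
      (fun Y hY => T.pSum_NN_eq_zero 1 hmsd Y hY) X hX
  by_contra hB
  push_neg at hB
  have hx_y : x ≠ y := T.arc_ne hxy
  have hy_z : y ≠ z := T.arc_ne hyz
  have hx_z : x ≠ z := T.arc_ne hxz
  have hX₀ : ({x, y, z} : Finset V).card = 3 := by
    rw [Finset.card_insert_of_notMem (by simp [hx_y, hx_z]),
      Finset.card_insert_of_notMem (by simp [hy_z]), Finset.card_singleton]
  have hzero := hS {x, y, z} hX₀
  have hnoDom : ∀ K : Finset V, ({x, y, z} : Finset V) ⊆ K → ¬ T.CycDom 1 K := by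
    intro K hsub hcs
    have hcard4 : K.card = 4 := by
      obtain ⟨p, q, r, _, _, hc4, _⟩ := hcs
      exact hc4
    obtain ⟨t, htX, hKeq⟩ := exists_insert_of_card4 hX₀ hsub hcard4
    simp only [Finset.mem_insert, Finset.mem_singleton] at htX
    push_neg at htX
    rw [hKeq] at hcs
    obtain ⟨hc, htz⟩ := (T.cycDom1_iff hxy hyz hxz htX.1 htX.2.1 htX.2.2).mp hcs
    exact hB t hc htz
  have hwy : w ≠ y := T.arc_ne hw1.2.2
  have hwz : w ≠ z := (T.arc_ne hw1.2.1).symm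
  have hwx : w ≠ x := (T.arc_ne hw2).symm
  have hSub : T.CycSub 1 (insert w ({x, y, z} : Finset V)) :=
    (T.cycSub1_iff hxy hyz hxz hwx hwy hwz).mpr ⟨hw1, hw2⟩
  have hsub0 : ({x, y, z} : Finset V) ⊆ insert w ({x, y, z} : Finset V) :=
    Finset.subset_insert _ _
  have hpos : 0 < -pSum (T.NN 1) (fun K => ({x, y, z} : Finset V) ⊆ K) := by
    unfold pSum
    rw [← Finset.sum_neg_distrib]
    apply Finset.sum_pos'
    · intro K _
      by_cases hsubK : ({x, y, z} : Finset V) ⊆ K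
      · rw [if_pos hsubK]
        simp only [NN]
        rw [if_neg (hnoDom K hsubK)]
        by_cases hdm : T.CycSub 1 K <;> simp [hdm]
      · rw [if_neg hsubK]
        simp
    · refine ⟨insert w ({x, y, z} : Finset V),
        Finset.mem_powerset.mpr (Finset.subset_univ _), ?_⟩
      rw [if_pos hsub0]
      simp only [NN]
      rw [if_pos hSub, if_neg (hnoDom _ hsub0)]
      norm_num
  rw [hzero] at hpos
  norm_num at hpos

end F2main
end Tournament

namespace Tournament
section Endgame
variable {V : Type*} [Fintype V] [DecidableEq V] (T : Tournament V)

/-- No `δ⁺` diamond with `a` in its 3-cycle. -/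
lemma E1 (hcard : 8 ≤ Fintype.card V) (hmsd : T.MinusSelfDual 3)
    (a b : V) (hab : a ≠ b)
    (htw : ∀ v, v ≠ a → v ≠ b → (T.arc v a ↔ T.arc v b))
    (htw2 : ∀ v, v ≠ a → v ≠ b → (T.arc a v ↔ T.arc b v)) :
    ∀ u w0 d, T.Cyc a u w0 → T.arc u d → T.arc w0 d → T.arc a d → False := by
  intro u w0 d hc hud hwd had
  have hua : u ≠ a := (T.arc_ne hc.1).symm
  have hub : u ≠ b := by
    intro h; rw [h] at hc
    have hw0a : w0 ≠ a := T.arc_ne hc.2.2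
    have hw0b : w0 ≠ b := (T.arc_ne hc.2.1).symm
    exact T.arc_asymm hc.2.1 ((htw w0 hw0a hw0b).mp hc.2.2)
  have hwa : w0 ≠ a := T.arc_ne hc.2.2
  have hwb : w0 ≠ b := by
    intro h; rw [h] at hc
    exact T.arc_asymm hc.1 ((htw u hua hub).mpr hc.2.1)
  have hda : d ≠ a := (T.arc_ne had).symm
  have hdb : d ≠ b := by
    intro h; rw [h] at hud
    exact T.arc_asymm hc.1 ((htw u hua hub).mpr hud)
  obtain ⟨s, hcs, has⟩ := T.F2a hcard hmsd hc.1 hud had hc hwd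
  exact (T.no_cyc_sub_a hcard hmsd a b hab htw htw2) ⟨u, d, s, hcs, hc.1, had, has⟩

/-- No `δ⁻` diamond with `a` in its 3-cycle. -/
lemma E2 (hcard : 8 ≤ Fintype.card V) (hmsd : T.MinusSelfDual 3)
    (a b : V) (hab : a ≠ b)
    (htw : ∀ v, v ≠ a → v ≠ b → (T.arc v a ↔ T.arc v b))
    (htw2 : ∀ v, v ≠ a → v ≠ b → (T.arc a v ↔ T.arc b v)) :
    ∀ u w0 e, T.Cyc a u w0 → T.arc e a → T.arc e u → T.arc e w0 → False := by
  intro u w0 e hc hea heu hew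
  have hea' : e ≠ a := T.arc_ne hea
  obtain ⟨s, hcs, hsu⟩ := T.F2b hcard hmsd hea hc.1 heu hc hew
  -- hcs : Cyc e a s, hsu : arc s u
  exact T.E1 hcard hmsd a b hab htw htw2 s e u (T.cyc_rot hcs) hsu heu hc.1

/-- Master lemma : no diamond at all. -/
lemma no_diamond (hcard : 8 ≤ Fintype.card V) (hmsd : T.MinusSelfDual 3)
    (a b : V) (hab : a ≠ b)
    (htw : ∀ v, v ≠ a → v ≠ b → (T.arc v a ↔ T.arc v b))
    (htw2 : ∀ v, v ≠ a → v ≠ b → (T.arc a v ↔ T.arc b v)) :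
    ∀ p q r d, T.Cyc p q r →
      ((T.arc p d ∧ T.arc q d ∧ T.arc r d) ∨ (T.arc d p ∧ T.arc d q ∧ T.arc d r)) → False := by
  have NCm := T.no_cyc_dom_a hcard hmsd a b hab htw
  have NCp := T.no_cyc_sub_a hcard hmsd a b hab htw htw2
  have hE1 := T.E1 hcard hmsd a b hab htw htw2
  have hE2 := T.E2 hcard hmsd a b hab htw htw2
  -- auxiliary: mixed-cycle patterns avoiding a,b
  have Lb1 : ∀ u1 u2 w d, T.Cyc u1 u2 w →
      T.arc a u1 → u1 ≠ b → T.arc a u2 → u2 ≠ b → T.arc w a → w ≠ b →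
      d ≠ a → d ≠ b →
      ((T.arc u1 d ∧ T.arc u2 d ∧ T.arc w d) ∨ (T.arc d u1 ∧ T.arc d u2 ∧ T.arc d w)) →
      False := by
    intro u1 u2 w d hc hau1 hu1b hau2 hu2b hwa hwb hda hdb hdm
    by_cases hsd : T.arc a d
    · rcases hdm with ⟨h1, h2, h3⟩ | ⟨h1, h2, h3⟩
      · exact hE1 u2 w d ⟨hau2, hc.2.1, hwa⟩ h2 h3 hsd
      · exact hE1 d w u1 ⟨hsd, h3, hwa⟩ h1 hc.2.2 hau1
    · have hds : T.arc d a := T.arc_total' (Ne.symm hda) hsd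
      rcases hdm with ⟨h1, h2, h3⟩ | ⟨h1, h2, h3⟩
      · exact hE2 u1 d w ⟨hau1, h1, hds⟩ hwa hc.2.2 h3
      · exact hE2 u2 w d ⟨hau2, hc.2.1, hwa⟩ hds h2 h3
  have Lb2 : ∀ u w1 w2 d, T.Cyc u w1 w2 →
      T.arc a u → u ≠ b → T.arc w1 a → w1 ≠ b → T.arc w2 a → w2 ≠ b →
      d ≠ a → d ≠ b →
      ((T.arc u d ∧ T.arc w1 d ∧ T.arc w2 d) ∨ (T.arc d u ∧ T.arc d w1 ∧ T.arc d w2)) →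
      False := by
    intro u w1 w2 d hc hau hub hw1a hw1b hw2a hw2b hda hdb hdm
    by_cases hsd : T.arc a d
    · rcases hdm with ⟨h1, h2, h3⟩ | ⟨h1, h2, h3⟩
      · exact hE1 u w1 d ⟨hau, hc.1, hw1a⟩ h1 h2 hsd
      · exact hE1 d w2 u ⟨hsd, h3, hw2a⟩ h1 hc.2.2 hau
    · have hds : T.arc d a := T.arc_total' (Ne.symm hda) hsd
      rcases hdm with ⟨h1, h2, h3⟩ | ⟨h1, h2, h3⟩
      · exact hE2 u d w2 ⟨hau, h1, hds⟩ hw2a hc.2.2 h3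
      · exact hE2 u w1 d ⟨hau, hc.1, hw1a⟩ hds h1 h2
  intro p q r d hc hdm
  -- d is distinct from the cycle
  by_cases hap : a = p ∨ a = q ∨ a = r
  · -- a in the cycle
    obtain ⟨s, t, hc1, hmem⟩ := T.cyc_mem_cases hc hap
    rcases hdm with ⟨h1, h2, h3⟩ | ⟨h1, h2, h3⟩
    · have harc : ∀ m, (m = p ∨ m = q ∨ m = r) → T.arc m d := by
        intro m hm; rcases hm with rfl | rfl | rfl; exacts [h1, h2, h3]
      exact hE1 s t d hc1 (harc s ((hmem s).mpr (Or.inr (Or.inl rfl))))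
        (harc t ((hmem t).mpr (Or.inr (Or.inr rfl)))) (harc a hap)
    · have harc : ∀ m, (m = p ∨ m = q ∨ m = r) → T.arc d m := by
        intro m hm; rcases hm with rfl | rfl | rfl; exacts [h1, h2, h3]
      exact hE2 s t d hc1 (harc a hap) (harc s ((hmem s).mpr (Or.inr (Or.inl rfl))))
        (harc t ((hmem t).mpr (Or.inr (Or.inr rfl))))
  · by_cases had : a = d
    · rcases hdm with ⟨h1, h2, h3⟩ | ⟨h1, h2, h3⟩
      · rw [← had] at h1 h2 h3
        exact NCm ⟨p, q, r, hc, h1, h2, h3⟩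
      · rw [← had] at h1 h2 h3
        exact NCp ⟨p, q, r, hc, h1, h2, h3⟩
    · -- a not in the pattern
      by_cases hbp : b = p ∨ b = q ∨ b = r
      · -- b in the cycle : substitute a for b
        obtain ⟨s, t, hc1, hmem⟩ := T.cyc_mem_cases hc hbp
        have hsmem : s = p ∨ s = q ∨ s = r := (hmem s).mpr (Or.inr (Or.inl rfl))
        have htmem : t = p ∨ t = q ∨ t = r := (hmem t).mpr (Or.inr (Or.inr rfl))
        have hsa : s ≠ a := by rintro rfl; exact hap hsmem
        have hta : t ≠ a := by rintro rfl; exact hap htmem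
        have hsb : s ≠ b := (T.arc_ne hc1.1).symm
        have htb : t ≠ b := T.arc_ne hc1.2.2
        have hcyc' : T.Cyc a s t :=
          ⟨(htw2 s hsa hsb).mpr hc1.1, hc1.2.1, (htw t hta htb).mpr hc1.2.2⟩
        have hdb : d ≠ b := by
          rintro rfl
          rcases hdm with ⟨h1, h2, h3⟩ | ⟨h1, h2, h3⟩
          · have : T.arc d d := by
              rcases hbp with rfl | rfl | rfl; exacts [h1, h2, h3]
            exact T.irrefl d this
          · have : T.arc d d := by
              rcases hbp with rfl | rfl | rfl; exacts [h1, h2, h3]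
            exact T.irrefl d this
        rcases hdm with ⟨h1, h2, h3⟩ | ⟨h1, h2, h3⟩
        · have harc : ∀ m, (m = p ∨ m = q ∨ m = r) → T.arc m d := by
            intro m hm; rcases hm with rfl | rfl | rfl; exacts [h1, h2, h3]
          have hbd : T.arc b d := harc b hbp
          have had2 : T.arc a d := (htw2 d (Ne.symm had) hdb).mpr hbd
          exact hE1 s t d hcyc' (harc s hsmem) (harc t htmem) had2
        · have harc : ∀ m, (m = p ∨ m = q ∨ m = r) → T.arc d m := by
            intro m hm; rcases hm with rfl | rfl | rfl; exacts [h1, h2, h3]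
          have hdb2 : T.arc d b := harc b hbp
          have hda2 : T.arc d a := (htw d (Ne.symm had) hdb).mpr hdb2
          exact hE2 s t d hcyc' hda2 (harc s hsmem) (harc t htmem)
      · by_cases hbd : b = d
        · -- b is the center : substitute a
          have hpb : p ≠ b := by rintro rfl; exact hbp (Or.inl rfl)
          have hqb : q ≠ b := by rintro rfl; exact hbp (Or.inr (Or.inl rfl))
          have hrb : r ≠ b := by rintro rfl; exact hbp (Or.inr (Or.inr rfl))
          have hpa : p ≠ a := by rintro rfl; exact hap (Or.inl rfl)
          have hqa : q ≠ a := by rintro rfl; exact hap (Or.inr (Or.inl rfl))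
          have hra : r ≠ a := by rintro rfl; exact hap (Or.inr (Or.inr rfl))
          rcases hdm with ⟨h1, h2, h3⟩ | ⟨h1, h2, h3⟩
          · rw [← hbd] at h1 h2 h3
            exact NCm ⟨p, q, r, hc, (htw p hpa hpb).mpr h1, (htw q hqa hqb).mpr h2,
              (htw r hra hrb).mpr h3⟩
          · rw [← hbd] at h1 h2 h3
            exact NCp ⟨p, q, r, hc, (htw2 p hpa hpb).mpr h1, (htw2 q hqa hqb).mpr h2,
              (htw2 r hra hrb).mpr h3⟩
        · -- pattern avoids a and b entirely
          have hpa : p ≠ a := by rintro rfl; exact hap (Or.inl rfl)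
          have hqa : q ≠ a := by rintro rfl; exact hap (Or.inr (Or.inl rfl))
          have hra : r ≠ a := by rintro rfl; exact hap (Or.inr (Or.inr rfl))
          have hpb : p ≠ b := by rintro rfl; exact hbp (Or.inl rfl)
          have hqb : q ≠ b := by rintro rfl; exact hbp (Or.inr (Or.inl rfl))
          have hrb : r ≠ b := by rintro rfl; exact hbp (Or.inr (Or.inr rfl))
          have hrot1 : ((T.arc q d ∧ T.arc r d ∧ T.arc p d) ∨
              (T.arc d q ∧ T.arc d r ∧ T.arc d p)) := by tauto
          have hrot2 : ((T.arc r d ∧ T.arc p d ∧ T.arc q d) ∨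
              (T.arc d r ∧ T.arc d p ∧ T.arc d q)) := by tauto
          by_cases hp : T.arc a p <;> by_cases hq : T.arc a q <;> by_cases hr : T.arc a r
          · exact NCp ⟨p, q, r, hc, hp, hq, hr⟩
          · have hr' := T.arc_total' (Ne.symm hra) hr
            exact Lb1 p q r d hc hp hpb hq hqb hr' hrb (Ne.symm had) (Ne.symm hbd) hdm
          · have hq' := T.arc_total' (Ne.symm hqa) hq
            exact Lb1 r p q d (T.cyc_rot (T.cyc_rot hc)) hr hrb hp hpb hq' hqb
              (Ne.symm had) (Ne.symm hbd) hrot2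
          · have hq' := T.arc_total' (Ne.symm hqa) hq
            have hr' := T.arc_total' (Ne.symm hra) hr
            exact Lb2 p q r d hc hp hpb hq' hqb hr' hrb (Ne.symm had) (Ne.symm hbd) hdm
          · have hp' := T.arc_total' (Ne.symm hpa) hp
            exact Lb1 q r p d (T.cyc_rot hc) hq hqb hr hrb hp' hpb
              (Ne.symm had) (Ne.symm hbd) hrot1
          · have hp' := T.arc_total' (Ne.symm hpa) hp
            have hr' := T.arc_total' (Ne.symm hra) hr
            exact Lb2 q r p d (T.cyc_rot hc) hq hqb hr' hrb hp' hpb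
              (Ne.symm had) (Ne.symm hbd) hrot1
          · have hp' := T.arc_total' (Ne.symm hpa) hp
            have hq' := T.arc_total' (Ne.symm hqa) hq
            exact Lb2 r p q d (T.cyc_rot (T.cyc_rot hc)) hr hrb hp' hpb hq' hqb
              (Ne.symm had) (Ne.symm hbd) hrot2
          · have hp' := T.arc_total' (Ne.symm hpa) hp
            have hq' := T.arc_total' (Ne.symm hqa) hq
            have hr' := T.arc_total' (Ne.symm hra) hr
            exact NCm ⟨p, q, r, hc, hp', hq', hr'⟩

end Endgame
end Tournament



/-- Let `T` be a tournament with at least 8 vertices that embeds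
a diamond. If `T` has an interval of cardinality 2, then `T` is not
`{-3}`-self dual. -/
theorem stmt9 {V : Type*} [Fintype V] (T : Tournament V)
    (hcard : 8 ≤ Fintype.card V) (hd : T.EmbedsDiamond)
    (hI : ∃ I : Set V, T.IsInterval I ∧ I.ncard = 2) :
    ¬ T.MinusSelfDual 3 := by
  intro hmsd
  classical
  obtain ⟨I, hInt, hI2⟩ := hI
  obtain ⟨a, b, hab, hIeq⟩ := Set.ncard_eq_two.mp hI2
  subst hIeq
  have htwboth : ∀ v, v ≠ a → v ≠ b →
      ((T.arc v a ↔ T.arc v b) ∧ (T.arc a v ↔ T.arc b v)) := by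
    intro v hva hvb
    have hv : v ∉ ({a, b} : Set V) := by simp [hva, hvb]
    rcases hInt v hv with h | h
    · have h1 := h a (by simp)
      have h2 := h b (by simp)
      exact ⟨iff_of_true h1 h2, iff_of_false (T.arc_asymm h1) (T.arc_asymm h2)⟩
    · have h1 := h a (by simp)
      have h2 := h b (by simp)
      exact ⟨iff_of_false (T.arc_asymm h1) (T.arc_asymm h2), iff_of_true h1 h2⟩
  have htw : ∀ v, v ≠ a → v ≠ b → (T.arc v a ↔ T.arc v b) :=
    fun v hva hvb => (htwboth v hva hvb).1
  have htw2 : ∀ v, v ≠ a → v ≠ b → (T.arc a v ↔ T.arc b v) :=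
    fun v hva hvb => (htwboth v hva hvb).2
  have hND := T.no_diamond hcard hmsd a b hab htw htw2
  obtain ⟨Xs, _, hIso⟩ := hd
  rcases hIso with ⟨e, he⟩ | ⟨e, he⟩
  · have harc : ∀ i j : Fin 4, T.arc ((e.symm i : ↥Xs) : V) ((e.symm j : ↥Xs) : V)
        ↔ Tournament.DeltaPlus.arc i j := by
      intro i j
      have h2 := he (e.symm i) (e.symm j)
      simpa [Tournament.restrict] using h2
    exact hND _ _ _ _
      ⟨(harc 0 1).mpr (Or.inl ⟨rfl, rfl⟩), (harc 1 2).mpr (Or.inr (Or.inl ⟨rfl, rfl⟩)), (harc 2 0).mpr (Or.inr (Or.inr (Or.inl ⟨rfl, rfl⟩)))⟩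
      (Or.inl ⟨(harc 0 3).mpr (Or.inr (Or.inr (Or.inr (Or.inl ⟨rfl, rfl⟩)))), (harc 1 3).mpr (Or.inr (Or.inr (Or.inr (Or.inr (Or.inl ⟨rfl, rfl⟩))))),
        (harc 2 3).mpr (Or.inr (Or.inr (Or.inr (Or.inr (Or.inr ⟨rfl, rfl⟩)))))⟩)
  · have harc : ∀ i j : Fin 4, T.arc ((e.symm i : ↥Xs) : V) ((e.symm j : ↥Xs) : V)
        ↔ Tournament.DeltaPlus.arc j i := by
      intro i j
      have h2 := he (e.symm i) (e.symm j)
      simpa [Tournament.restrict, Tournament.DeltaMinus, Tournament.dual] using h2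
    exact hND _ _ _ _
      ⟨(harc 1 0).mpr (Or.inl ⟨rfl, rfl⟩), (harc 0 2).mpr (Or.inr (Or.inr (Or.inl ⟨rfl, rfl⟩))), (harc 2 1).mpr (Or.inr (Or.inl ⟨rfl, rfl⟩))⟩
      (Or.inr ⟨(harc 3 1).mpr (Or.inr (Or.inr (Or.inr (Or.inr (Or.inl ⟨rfl, rfl⟩))))), (harc 3 0).mpr (Or.inr (Or.inr (Or.inr (Or.inl ⟨rfl, rfl⟩)))),
        (harc 3 2).mpr (Or.inr (Or.inr (Or.inr (Or.inr (Or.inr ⟨rfl, rfl⟩)))))⟩)
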